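/- arXiv:1210.2118 — 4 statements merged into one kernel-verified Lean document; each statement's English description precedes it below -/
import Mathlib

section
/- A topological space X satisfies the Menger property if and only if for every infinite cardinal μ and every sequence (x_f) indexed by the set ^ω([μ]^{<ω}) of functions from ω to the finite subsets of μ, there exists a functionally regular ultrafilter D over ^ω([μ]^{<ω}) such that the sequence has a D-limit point in X. -/
open Cardinal Set Filter

universe u

/-- The Menger property: for every `ω`-indexed sequence of open covers there are finite
subfamilies whose union is a cover. -/
def Menger (X : Type u) [TopologicalSpace X] : Prop :=
  ∀ U : ℕ → Set (Set X),
    (∀ n, ∀ u ∈ U n, IsOpen u) →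
    (∀ n, ⋃₀ U n = Set.univ) →
    ∃ V : ℕ → Set (Set X),
      (∀ n, V n ⊆ U n) ∧ (∀ n, (V n).Finite) ∧ ⋃₀ (⋃ n, V n) = Set.univ


/-- `p` is an `F`-limit point of the sequence `x`. -/
def IsFLimit {I : Type*} {X : Type*} [TopologicalSpace X] (F : Filter I) (x : I → X) (p : X) : Prop :=
  ∀ U : Set X, IsOpen U → p ∈ U → {i | x i ∈ U} ∈ F

/-- An ultrafilter `D` over `^ω([μ]^{<ω})` (functions from `ℕ` to finite subsets of `M`)
is functionally regular if there is `a : ℕ` such that `{f | b ∈ f a} ∈ D` for every `b : M`. -/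
def FunRegFin {M : Type u} (D : Ultrafilter (ℕ → Finset M)) : Prop :=
  ∃ a : ℕ, ∀ b : M, {f : ℕ → Finset M | b ∈ f a} ∈ D

/-- Corollary 1.4 (1)⇔(2): `X` is Menger iff for every infinite cardinal `μ` (the
cardinality of an infinite type `M`) and every sequence indexed by `^ω([μ]^{<ω})`, some
functionally regular ultrafilter `D` gives the sequence a `D`-limit point in `X`. -/
theorem stmt5 (X : Type u) [TopologicalSpace X] :
    Menger X ↔
      ∀ (M : Type u), Infinite M →
        ∀ x : (ℕ → Finset M) → X,
          ∃ D : Ultrafilter (ℕ → Finset M),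
            FunRegFin D ∧ ∃ p : X, IsFLimit (D : Filter _) x p := by
  classical
  constructor
  · -- Menger → ultrafilter limits
    intro hM M _ x
    haveI : Nonempty X := ⟨x (fun _ => ∅)⟩
    -- Key claim: there is a coordinate `a` and a cluster point `p`.
    have key : ∃ a : ℕ, ∃ p : X, ∀ U : Set X, IsOpen U → p ∈ U →
        ∀ s : Finset M, ∃ f : ℕ → Finset M, s ⊆ f a ∧ x f ∈ U := by
      by_contra hcon
      push_neg at hcon
      choose Uc hopen hmem s hs using hcon
      -- open covers
      have hcov := hM (fun n => Set.range (fun p => Uc n p))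
        (fun n u hu => by obtain ⟨p, rfl⟩ := hu; exact hopen n p)
        (fun n => by
          apply Set.eq_univ_of_forall
          intro q
          exact ⟨Uc n q, ⟨q, rfl⟩, hmem n q⟩)
      obtain ⟨V, hVsub, hVfin, hVcov⟩ := hcov
      -- pick witnessing points
      have hp : ∀ (n : ℕ) (v : Set X), ∃ p : X, v ∈ V n → Uc n p = v := by
        intro n v
        by_cases hv : v ∈ V n
        · obtain ⟨p, hp⟩ := hVsub n hv
          exact ⟨p, fun _ => hp⟩
        · exact ⟨Classical.arbitrary X, fun h => absurd h hv⟩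
      choose pf hpf using hp
      set f : ℕ → Finset M :=
        fun n => (hVfin n).toFinset.biUnion (fun v => s n (pf n v)) with hf
      have : x f ∈ ⋃₀ (⋃ n, V n) := hVcov ▸ Set.mem_univ _
      obtain ⟨v, hv, hxv⟩ := this
      obtain ⟨n, hvn⟩ := Set.mem_iUnion.mp hv
      have hsub : s n (pf n v) ⊆ f n := by
        apply Finset.subset_biUnion_of_mem (fun v => s n (pf n v))
        exact (hVfin n).mem_toFinset.mpr hvn
      have := hs n (pf n v) f hsub
      rw [hpf n v hvn] at this
      exact this hxv
    obtain ⟨a, p, hkey⟩ := key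
    -- the filter generated by the regularity sets
    set G : Filter (ℕ → Finset M) := ⨅ s : Finset M, 𝓟 {f | s ⊆ f a} with hG
    have hdir : Directed (· ≥ ·) (fun s : Finset M => (𝓟 {f : ℕ → Finset M | s ⊆ f a})) := by
      intro s t
      exact ⟨s ∪ t,
        principal_mono.mpr (fun f hf => Finset.union_subset_left hf),
        principal_mono.mpr (fun f hf => Finset.union_subset_right hf)⟩
    have hGmem : ∀ s : Finset M, {f : ℕ → Finset M | s ⊆ f a} ∈ G :=
      fun s => mem_iInf_of_mem s (mem_principal_self _)
    have hne : NeBot (G ⊓ comap x (nhds p)) := by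
      rw [Filter.inf_neBot_iff]
      intro t ht t' ht'
      rw [hG, mem_iInf_of_directed hdir] at ht
      obtain ⟨sF, hsF⟩ := ht
      rw [mem_principal] at hsF
      obtain ⟨W, hW, hWt'⟩ := mem_comap.mp ht'
      obtain ⟨W', hW'W, hW'open, hpW'⟩ := mem_nhds_iff.mp hW
      obtain ⟨g, hg1, hg2⟩ := hkey W' hW'open hpW' sF
      exact ⟨g, hsF hg1, hWt' (hW'W hg2)⟩
    refine ⟨@Ultrafilter.of _ _ hne, ⟨a, fun b => ?_⟩, p, ?_⟩
    · have h1 : {f : ℕ → Finset M | ({b} : Finset M) ⊆ f a} ∈ G ⊓ comap x (nhds p) :=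
        mem_inf_of_left (hGmem {b})
      have h2 := (@Ultrafilter.of_le _ _ hne) h1
      simpa [Finset.singleton_subset_iff] using h2
    · intro W hWopen hpW
      have h1 : x ⁻¹' W ∈ G ⊓ comap x (nhds p) :=
        mem_inf_of_right (preimage_mem_comap (hWopen.mem_nhds hpW))
      exact (@Ultrafilter.of_le _ _ hne) h1
  · -- ultrafilter limits → Menger
    intro h U hUopen hUcov
    by_cases hX : Nonempty X
    · haveI := hX
      haveI : Nonempty (Set X) := ⟨∅⟩
      set Vf : (ℕ → Finset (ℕ × Set X)) → ℕ → Set (Set X) :=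
        fun f n => {u | u ∈ U n ∧ (n, u) ∈ f n} with hVf
      by_cases hex : ∃ f, ⋃₀ (⋃ n, Vf f n) = Set.univ
      · obtain ⟨f, hf⟩ := hex
        refine ⟨Vf f, fun n u hu => hu.1, fun n => ?_, hf⟩
        exact Set.Finite.subset ((f n).finite_toSet.image Prod.snd)
          (fun u hu => ⟨(n, u), hu.2, rfl⟩)
      · push_neg at hex
        have hpt : ∀ f, ∃ y : X, y ∉ ⋃₀ (⋃ n, Vf f n) := by
          intro f
          exact (Set.ne_univ_iff_exists_notMem _).mp (hex f)
        choose x hx using hpt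
        obtain ⟨D, ⟨a, hreg⟩, p, hlim⟩ := h (ℕ × Set X) inferInstance x
        have hpmem : p ∈ ⋃₀ U a := (hUcov a) ▸ Set.mem_univ p
        obtain ⟨u₀, hu₀, hpu₀⟩ := hpmem
        have h1 : {f | x f ∈ u₀} ∈ D := hlim u₀ (hUopen a u₀ hu₀) hpu₀
        have h2 : {f : ℕ → Finset (ℕ × Set X) | (a, u₀) ∈ f a} ∈ D := hreg (a, u₀)
        obtain ⟨f, hf1, hf2⟩ := Ultrafilter.nonempty_of_mem (Filter.inter_mem h1 h2)
        exact absurd ⟨u₀, Set.mem_iUnion.mpr ⟨a, hu₀, hf2⟩, hf1⟩ (hx f)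
    · refine ⟨fun _ => ∅, fun n => Set.empty_subset _, fun n => Set.finite_empty, ?_⟩
      apply Set.eq_univ_of_forall
      intro q
      exact absurd ⟨q⟩ hX
end

section
/- A topological space X satisfies the Menger property if and only if X is Lindelöf and for every sequence (x_f) indexed by the set ^ω([ω]^{<ω}) of functions from ω to the finite subsets of ω, there exists a functionally regular ultrafilter D over ^ω([ω]^{<ω}) such that the sequence has a D-limit point in X. -/
/-!
A functionally regular ultrafilter concentrating on coordinate `a` and having `x` converge to `p`
exists exactly when `p` is a cluster point of `x` along `comap (· a) atTop`.

If `X` is Menger and some `x` had no such cluster point, every `p` would have, at every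
coordinate `a`, an open neighbourhood `U a p` and a finite `S a p` with `x f ∉ U a p` whenever
`S a p ⊆ f a`. Menger selects finitely many `U a p` for each `a` covering `X`; letting `f a` be the
union of the corresponding `S a p`, the point `x f` lies in none of them.

Conversely, by Lindelöfness it suffices to select finite subfamilies from covers `(u n i)` indexed
by `ℕ`. If no `f : ℕ → Finset ℕ` selects a cover, choose `x f` outside `⋃ n, ⋃ i ∈ f n, u n i`;
a cluster point `p ∈ u a i` then yields some `f` with `i ∈ f a` and `x f ∈ u a i`.
-/

open Cardinal Set Filter

universe u

open Topology

variable {X : Type u} [TopologicalSpace X]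

theorem isFLimit_iff_tendsto {I : Type*} {F : Filter I} {x : I → X} {p : X} :
    IsFLimit F x p ↔ Tendsto x F (𝓝 p) := by
  rw [(nhds_basis_opens p).tendsto_right_iff]
  exact ⟨fun h U hU => h U hU.2 hU.1, fun h U hU hpU => h U ⟨hpU, hU⟩⟩

theorem funRegFin_iff_tendsto {M : Type*} {D : Ultrafilter (ℕ → Finset M)} :
    FunRegFin D ↔ ∃ a, Tendsto (fun f : ℕ → Finset M => f a) D atTop := by
  refine exists_congr fun a => ⟨fun h => tendsto_atTop.2 fun S => ?_, fun h b => ?_⟩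
  · exact (eventually_all_finset S).2 fun b _ => h b
  · exact (tendsto_atTop.1 h {b}).mono fun f => Finset.singleton_subset_iff.1

theorem exists_funRegFin_isFLimit_iff {M : Type*} (x : (ℕ → Finset M) → X) :
    (∃ D : Ultrafilter (ℕ → Finset M), FunRegFin D ∧ ∃ p, IsFLimit (D : Filter _) x p) ↔
      ∃ a p, MapClusterPt p (comap (fun f : ℕ → Finset M => f a) atTop) x := by
  simp only [funRegFin_iff_tendsto, isFLimit_iff_tendsto, mapClusterPt_iff_ultrafilter,
    ← tendsto_iff_comap]
  constructor
  · rintro ⟨D, ⟨a, ha⟩, p, hp⟩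
    exact ⟨a, p, D, ha, hp⟩
  · rintro ⟨a, p, D, ha, hp⟩
    exact ⟨D, ⟨a, ha⟩, p, hp⟩

theorem Menger.countable_subcover (hM : Menger X) (U : Set (Set X)) (hU : ∀ u ∈ U, IsOpen u)
    (hcov : ⋃₀ U = Set.univ) : ∃ V ⊆ U, V.Countable ∧ ⋃₀ V = Set.univ := by
  obtain ⟨V, hVU, hVfin, hVcov⟩ := hM (fun _ => U) (fun _ => hU) (fun _ => hcov)
  exact ⟨⋃ n, V n, iUnion_subset hVU, countable_iUnion fun n => (hVfin n).countable, hVcov⟩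

theorem Menger.exists_finset {ι : Type*} (hM : Menger X) (u : ℕ → ι → Set X)
    (hu : ∀ n i, IsOpen (u n i)) (hcov : ∀ n, ⋃ i, u n i = Set.univ) :
    ∃ F : ℕ → Finset ι, ∀ q, ∃ n, ∃ i ∈ F n, q ∈ u n i := by
  classical
  obtain ⟨V, hVu, hVfin, hVcov⟩ := hM (fun n => range (u n))
    (fun n => forall_mem_range.2 (hu n)) (fun n => by rw [sUnion_range, hcov n])
  have hpre : ∀ n, ∃ F : Finset ι, F.image (u n) = (hVfin n).toFinset := fun n =>
    let ⟨F, _, hF⟩ := Finset.subset_set_image_iff (s := Set.univ).1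
      (by simpa only [Finite.coe_toFinset, image_univ] using hVu n)
    ⟨F, hF⟩
  choose F hF using hpre
  refine ⟨F, fun q => ?_⟩
  obtain ⟨v, hv, hqv⟩ := mem_sUnion.1 (hVcov ▸ mem_univ q)
  obtain ⟨n, hvn⟩ := mem_iUnion.1 hv
  obtain ⟨i, hi, rfl⟩ := Finset.mem_image.1 ((hF n).symm ▸ (hVfin n).mem_toFinset.2 hvn)
  exact ⟨n, i, hi, hqv⟩

theorem menger_of_countable_subcover_of_exists_finset
    (hL : ∀ U : Set (Set X), (∀ u ∈ U, IsOpen u) → ⋃₀ U = Set.univ →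
      ∃ V ⊆ U, V.Countable ∧ ⋃₀ V = Set.univ)
    (hsel : ∀ u : ℕ → ℕ → Set X, (∀ n i, IsOpen (u n i)) → (∀ n, ⋃ i, u n i = Set.univ) →
      ∃ F : ℕ → Finset ℕ, ∀ q, ∃ n, ∃ i ∈ F n, q ∈ u n i) :
    Menger X := by
  intro U hU hcov
  cases isEmpty_or_nonempty X
  · exact ⟨fun _ => ∅, fun _ => empty_subset _, fun _ => finite_empty, Subsingleton.elim _ _⟩
  have hrange : ∀ n, ∃ u : ℕ → Set X, range u ⊆ U n ∧ ⋃ i, u i = Set.univ := fun n => by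
    obtain ⟨W, hWU, hWc, hWcov⟩ := hL (U n) (hU n) (hcov n)
    obtain ⟨u, rfl⟩ := hWc.exists_eq_range (Nonempty.of_sUnion_eq_univ hWcov)
    exact ⟨u, hWU, sUnion_range u ▸ hWcov⟩
  choose u huU hucov using hrange
  obtain ⟨F, hF⟩ := hsel u (fun n i => hU n _ (huU n (mem_range_self i))) hucov
  refine ⟨fun n => u n '' F n, fun n => (image_subset_range _ _).trans (huU n),
    fun n => (F n).finite_toSet.image _, eq_univ_of_forall fun q => ?_⟩
  obtain ⟨n, i, hi, hq⟩ := hF q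
  exact mem_sUnion.2 ⟨u n i, mem_iUnion.2 ⟨n, mem_image_of_mem _ hi⟩, hq⟩

theorem Menger.exists_mapClusterPt {M : Type*} (hM : Menger X) (x : (ℕ → Finset M) → X) :
    ∃ a p, MapClusterPt p (comap (fun f : ℕ → Finset M => f a) atTop) x := by
  classical
  by_contra! h
  have hsep : ∀ a p, ∃ U : Set X, IsOpen U ∧ p ∈ U ∧
      ∃ S : Finset M, ∀ f : ℕ → Finset M, S ⊆ f a → x f ∉ U := fun a p => by
    have := h a p
    rw [(nhds_basis_opens p).mapClusterPt_iff_frequently] at this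
    push Not at this
    obtain ⟨U, ⟨hpU, hU⟩, hev⟩ := this
    obtain ⟨S, -, hS⟩ := (atTop_basis.comap _).eventually_iff.1 hev
    exact ⟨U, hU, hpU, S, fun f hf => hS hf⟩
  choose U hU hpU S hS using hsep
  obtain ⟨F, hF⟩ := hM.exists_finset U hU fun a => iUnion_eq_univ_iff.2 fun p => ⟨p, hpU a p⟩
  obtain ⟨a, p, hp, hxp⟩ := hF (x fun a => (F a).biUnion (S a))
  exact hS a p _ (Finset.subset_biUnion_of_mem _ hp) hxp

theorem exists_finset_cover_of_forall_mapClusterPt {M : Type*}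
    (hx : ∀ x : (ℕ → Finset M) → X,
      ∃ a p, MapClusterPt p (comap (fun f : ℕ → Finset M => f a) atTop) x)
    (u : ℕ → M → Set X) (hu : ∀ n i, IsOpen (u n i)) (hcov : ∀ n, ⋃ i, u n i = Set.univ) :
    ∃ F : ℕ → Finset M, ∀ q, ∃ n, ∃ i ∈ F n, q ∈ u n i := by
  by_contra! h
  choose x hx' using h
  obtain ⟨a, p, hp⟩ := hx x
  obtain ⟨i, hpi⟩ := mem_iUnion.1 (hcov a ▸ mem_univ p)
  have hfreq := mapClusterPt_iff_frequently.1 hp _ ((hu a i).mem_nhds hpi)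
  have hev : ∀ᶠ f in comap (fun f : ℕ → Finset M => f a) atTop, {i} ≤ f a :=
    tendsto_comap.eventually (eventually_ge_atTop {i})
  obtain ⟨f, hxf, hif⟩ := (hfreq.and_eventually hev).exists
  exact hx' f a i (Finset.singleton_subset_iff.1 hif) hxf

/-- Corollary 1.4 (1)⇔(3): `X` is Menger iff `X` is Lindelöf and for every sequence
indexed by `^ω([ω]^{<ω})` some functionally regular ultrafilter `D` gives the sequence a
`D`-limit point in `X`. -/
theorem stmt6 (X : Type u) [TopologicalSpace X] :
    Menger X ↔
      ((∀ U : Set (Set X), (∀ u ∈ U, IsOpen u) → ⋃₀ U = Set.univ →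
          ∃ V ⊆ U, V.Countable ∧ ⋃₀ V = Set.univ) ∧
        ∀ x : (ℕ → Finset ℕ) → X,
          ∃ D : Ultrafilter (ℕ → Finset ℕ),
            FunRegFin D ∧ ∃ p : X, IsFLimit (D : Filter _) x p) := by
  simp only [exists_funRegFin_isFLimit_iff]
  exact ⟨fun hM => ⟨hM.countable_subcover, hM.exists_mapClusterPt⟩,
    fun ⟨hL, hx⟩ => menger_of_countable_subcover_of_exists_finset hL
      (exists_finset_cover_of_forall_mapClusterPt hx)⟩
end

section
/- Let λ, μ, κ be nonzero cardinals and I = ^λ([μ]^{<κ}) the set of functions from λ to [μ]^{<κ}. If a topological space X satisfies R(λ,μ;<κ), then for every I-indexed sequence (x_f)_{f∈I} of elements of X there exist a filter F over I and ᾱ ∈ λ such that: (a) for every A ∈ F and every β ∈ μ, A ∩ {f ∈ I : β ∈ f(ᾱ)} ≠ ∅, and (b) the sequence (x_f)_{f∈I} has an F-limit point in X. -/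
open Cardinal Set Filter

universe u

/-- `X` satisfies `R(λ,μ;<κ)` where the index set `λ` is (the cardinality of) the type `L`:
for every `L`-indexed sequence of open covers of `X`, each of cardinality `≤ mu`, one can
select subfamilies of cardinality `< kappa` whose union is a cover of `X`. -/
def SatisfiesR (X : Type u) [TopologicalSpace X] (L : Type u) (mu kappa : Cardinal.{u}) : Prop :=
  ∀ U : L → Set (Set X),
    (∀ a, ∀ u ∈ U a, IsOpen u) →
    (∀ a, ⋃₀ U a = Set.univ) →
    (∀ a, #(U a) ≤ mu) →
    ∃ V : L → Set (Set X),
      (∀ a, V a ⊆ U a) ∧ (∀ a, #(V a) < kappa) ∧ ⋃₀ (⋃ a, V a) = Set.univ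

/-- Proposition 4.1 (1)⇒(2): `λ = #L`, `μ = #M`, `κ` nonzero cardinals. If `X` satisfies
`R(λ,μ;<κ)`, then for every sequence indexed by `I = ^λ([μ]^{<κ})` there are a filter `F`
over `I` and `ᾱ` such that (a) every `A ∈ F` meets every `{f | β ∈ f(ᾱ)}` and (b) the
sequence has an `F`-limit point in `X`. -/
theorem stmt15 (X : Type u) [TopologicalSpace X] (L M : Type u) [Nonempty L] [Nonempty M]
    (kappa : Cardinal.{u}) (hkappa : kappa ≠ 0)
    (hR : SatisfiesR X L (#M) kappa) :
    ∀ x : (L → {s : Set M // #s < kappa}) → X,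
      ∃ (F : Filter (L → {s : Set M // #s < kappa})) (a : L),
        (∀ A ∈ F, ∀ b : M,
          (A ∩ {f : L → {s : Set M // #s < kappa} | b ∈ (f a : Set M)}).Nonempty) ∧
        ∃ p : X, IsFLimit F x p := by
  intro x
  by_contra h
  push_neg at h
  -- key: for every a and p, some b with p outside closure of x-image of {f | b ∈ f a}
  have key : ∀ (a : L) (p : X), ∃ b : M,
      p ∉ closure (x '' {f : L → {s : Set M // #s < kappa} | b ∈ (f a : Set M)}) := by
    intro a p
    by_contra hc
    push_neg at hc
    refine h (Filter.comap x (nhds p)) a ?_ p ?_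
    · intro A hA b
      obtain ⟨U, hU, hsub⟩ := hA
      obtain ⟨y, hyU, f, hf, rfl⟩ := mem_closure_iff_nhds.mp (hc b) U hU
      exact ⟨f, hsub hyU, hf⟩
    · intro U hUo hpU
      exact Filter.preimage_mem_comap (hUo.mem_nhds hpU)
  set V : L → M → Set X := fun a b =>
    (closure (x '' {f : L → {s : Set M // #s < kappa} | b ∈ (f a : Set M)}))ᶜ with hV
  obtain ⟨W, hWsub, hWcard, hWcov⟩ := hR (fun a => Set.range (V a))
    (by
      rintro a u ⟨b, rfl⟩
      exact isClosed_closure.isOpen_compl)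
    (by
      intro a
      rw [Set.eq_univ_iff_forall]
      intro p
      obtain ⟨b, hb⟩ := key a p
      exact ⟨V a b, Set.mem_range_self b, hb⟩)
    (fun a => Cardinal.mk_range_le)
  choose g hg using fun (a : L) (u : W a) => (hWsub a u.2 : (u : Set X) ∈ Set.range (V a))
  set f₀ : L → {s : Set M // #s < kappa} :=
    fun a => ⟨Set.range (g a), lt_of_le_of_lt Cardinal.mk_range_le (hWcard a)⟩ with hf₀
  have hx : x f₀ ∈ ⋃₀ (⋃ a, W a) := by rw [hWcov]; trivial
  obtain ⟨u, hu, hxu⟩ := hx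
  obtain ⟨a, hua⟩ := Set.mem_iUnion.mp hu
  have hb : g a ⟨u, hua⟩ ∈ (f₀ a : Set M) := Set.mem_range_self _
  have hmem : x f₀ ∈ closure (x '' {f : L → {s : Set M // #s < kappa} |
      g a ⟨u, hua⟩ ∈ (f a : Set M)}) :=
    subset_closure ⟨f₀, hb, rfl⟩
  have : x f₀ ∈ V a (g a ⟨u, hua⟩) := by rw [hg a ⟨u, hua⟩]; exact hxu
  exact this hmem
end

section
/- Let λ, μ, κ be nonzero cardinals and I = ^λ([μ]^{<κ}) the set of functions from λ to [μ]^{<κ}. Suppose a topological space X has the property that for every I-indexed sequence (x_f)_{f∈I} of elements of X there exist a filter F over I and ᾱ ∈ λ such that: (a) for every A ∈ F and every β ∈ μ, A ∩ {f ∈ I : β ∈ f(ᾱ)} ≠ ∅, and (b) the sequence (x_f)_{f∈I} has an F-limit point in X. Then X satisfies R(λ,μ;<κ). -/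
open Cardinal Set Filter

universe u

/-- Proposition 4.1 (2)⇒(1): `λ = #L`, `μ = #M`, `κ` nonzero cardinals. If for every
sequence indexed by `I = ^λ([μ]^{<κ})` there are a filter `F` over `I` and `ᾱ` such that
(a) every `A ∈ F` meets every `{f | β ∈ f(ᾱ)}` and (b) the sequence has an `F`-limit
point in `X`, then `X` satisfies `R(λ,μ;<κ)`. -/
theorem stmt16 (X : Type u) [TopologicalSpace X] (L M : Type u) [Nonempty L] [Nonempty M]
    (kappa : Cardinal.{u}) (hkappa : kappa ≠ 0)
    (h : ∀ x : (L → {s : Set M // #s < kappa}) → X,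
      ∃ (F : Filter (L → {s : Set M // #s < kappa})) (a : L),
        (∀ A ∈ F, ∀ b : M,
          (A ∩ {f : L → {s : Set M // #s < kappa} | b ∈ (f a : Set M)}).Nonempty) ∧
        ∃ p : X, IsFLimit F x p) :
    SatisfiesR X L (#M) kappa := by
  intro U hopen hcov hcard
  classical
  by_cases hX : Nonempty X
  swap
  · refine ⟨fun _ => ∅, fun a => Set.empty_subset _, fun a => ?_, ?_⟩
    · simpa using pos_iff_ne_zero.2 hkappa
    · have : IsEmpty X := not_nonempty_iff.1 hX
      simp [Set.univ_eq_empty_iff.2 this]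
  · have hne : ∀ a, (U a).Nonempty := by
      intro a
      obtain ⟨x0⟩ := hX
      have hx0 : x0 ∈ ⋃₀ U a := (hcov a) ▸ Set.mem_univ x0
      obtain ⟨u, hu, -⟩ := hx0
      exact ⟨u, hu⟩
    have hemb : ∀ a, ∃ e : U a → M, Function.Injective e := by
      intro a
      obtain ⟨e⟩ := (Cardinal.le_def _ _).1 (hcard a)
      exact ⟨e, e.injective⟩
    choose e he using hemb
    haveI : ∀ a, Nonempty (U a) := fun a => (hne a).to_subtype
    let g : L → M → Set X := fun a m => (Function.invFun (e a) m).1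
    have hg_mem : ∀ a m, g a m ∈ U a := fun a m => (Function.invFun (e a) m).2
    have hg_surj : ∀ a, ∀ u ∈ U a, ∃ m, g a m = u := by
      intro a u hu
      obtain ⟨m, hm⟩ := Function.invFun_surjective (he a) ⟨u, hu⟩
      exact ⟨m, by simp [g, hm]⟩
    let C : (L → {s : Set M // #s < kappa}) → Set X :=
      fun f => ⋃ a, ⋃ b ∈ (f a : Set M), g a b
    have hxex : ∀ f, ∃ x : X, C f ≠ Set.univ → x ∉ C f := by
      intro f
      by_cases hcf : C f = Set.univ
      · exact ⟨Classical.arbitrary X, fun h' => absurd hcf h'⟩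
      · obtain ⟨x, hx⟩ := (Set.ne_univ_iff_exists_notMem _).1 hcf
        exact ⟨x, fun _ => hx⟩
    choose x hx using hxex
    obtain ⟨F, a0, hF, p, hp⟩ := h x
    obtain ⟨u, hu, hpu⟩ : ∃ u ∈ U a0, p ∈ u := by
      have hp0 : p ∈ ⋃₀ U a0 := (hcov a0) ▸ Set.mem_univ p
      exact hp0
    obtain ⟨b, hb⟩ := hg_surj a0 u hu
    have hA : {f | x f ∈ u} ∈ F := hp u (hopen a0 u hu) hpu
    obtain ⟨f, hf1, hf2⟩ := hF _ hA b
    have hcf : C f = Set.univ := by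
      by_contra hcf
      exact hx f hcf (Set.mem_iUnion.2 ⟨a0, Set.mem_iUnion₂.2 ⟨b, hf2, hb ▸ hf1⟩⟩)
    refine ⟨fun a => g a '' (f a : Set M), ?_, ?_, ?_⟩
    · rintro a v ⟨m, -, rfl⟩
      exact hg_mem a m
    · intro a
      exact lt_of_le_of_lt Cardinal.mk_image_le (f a).2
    · ext y
      simp only [Set.mem_univ, iff_true]
      have hy : y ∈ C f := hcf ▸ Set.mem_univ y
      obtain ⟨a, hy⟩ := Set.mem_iUnion.1 hy
      obtain ⟨m, hm, hym⟩ := Set.mem_iUnion₂.1 hy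
      exact ⟨g a m, Set.mem_iUnion.2 ⟨a, Set.mem_image_of_mem _ hm⟩, hym⟩
end
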